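/- Let A_t ∈ ℝ^{m×n} and B_t ∈ ℝ^{n×p} for t = 1,…,T be real matrices. Then ‖∑_{t=1}^T A_t B_t‖₂ ≤ ‖∑_{t=1}^T A_t A_tᵀ‖₂^{1/2} · ‖∑_{t=1}^T B_tᵀ B_t‖₂^{1/2}. -/

import Mathlib

/-!
Stack the `A t` side by side into `R = [A₁ ⋯ A_T]` and the `B t` on top of each other into
`C = [B₁; ⋯; B_T]`. Then `∑ t, A t * B t = R * C`, `R * Rᵀ = ∑ t, A t * (A t)ᵀ` and
`Cᵀ * C = ∑ t, (B t)ᵀ * B t`, so the inequality is submultiplicativity `‖R * C‖ ≤ ‖R‖ * ‖C‖`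
combined with the C⋆-identities `‖R‖² = ‖R * Rᵀ‖` and `‖C‖² = ‖Cᵀ * C‖`.
-/

open Matrix

noncomputable def specNorm {m n : ℕ} (A : Matrix (Fin m) (Fin n) ℝ) : ℝ :=
  ‖LinearMap.toContinuousLinearMap (Matrix.toEuclideanLin A)‖

namespace Matrix

variable {ι m n p R : Type*}

def blockRow (A : ι → Matrix m n R) : Matrix m (ι × n) R :=
  of fun i k => A k.1 i k.2

def blockCol (B : ι → Matrix n p R) : Matrix (ι × n) p R :=
  of fun k j => B k.1 k.2 j

theorem blockRow_mul_blockCol [Fintype ι] [Fintype n] [AddCommMonoid R] [Mul R]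
    (A : ι → Matrix m n R) (B : ι → Matrix n p R) :
    blockRow A * blockCol B = ∑ t, A t * B t := by
  ext i j
  simp only [mul_apply, blockRow, blockCol, of_apply, Fintype.sum_prod_type, sum_apply]

theorem conjTranspose_blockRow [Star R] (A : ι → Matrix m n R) :
    (blockRow A)ᴴ = blockCol fun t => (A t)ᴴ :=
  rfl

theorem conjTranspose_blockCol [Star R] (B : ι → Matrix n p R) :
    (blockCol B)ᴴ = blockRow fun t => (B t)ᴴ :=
  rfl

open scoped Matrix.Norms.L2Operator

variable {𝕜 : Type*} [RCLike 𝕜]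

theorem l2_opNorm_eq_sqrt_conjTranspose_mul_self [Fintype m] [Fintype n] [DecidableEq n]
    (A : Matrix m n 𝕜) : ‖A‖ = √‖Aᴴ * A‖ := by
  rw [l2_opNorm_conjTranspose_mul_self, Real.sqrt_mul_self (norm_nonneg A)]

theorem l2_opNorm_eq_sqrt_mul_conjTranspose_self [Fintype m] [DecidableEq m] [Fintype n]
    [DecidableEq n] (A : Matrix m n 𝕜) : ‖A‖ = √‖A * Aᴴ‖ := by
  rw [← l2_opNorm_conjTranspose A, l2_opNorm_eq_sqrt_conjTranspose_mul_self,
    conjTranspose_conjTranspose]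

theorem l2_opNorm_sum_mul_le [Fintype ι] [DecidableEq ι] [Fintype m] [DecidableEq m]
    [Fintype n] [DecidableEq n] [Fintype p] [DecidableEq p]
    (A : ι → Matrix m n 𝕜) (B : ι → Matrix n p 𝕜) :
    ‖∑ t, A t * B t‖ ≤ √‖∑ t, A t * (A t)ᴴ‖ * √‖∑ t, (B t)ᴴ * B t‖ :=
  calc ‖∑ t, A t * B t‖ = ‖blockRow A * blockCol B‖ := by rw [blockRow_mul_blockCol]
    _ ≤ ‖blockRow A‖ * ‖blockCol B‖ := l2_opNorm_mul _ _
    _ = √‖∑ t, A t * (A t)ᴴ‖ * √‖∑ t, (B t)ᴴ * B t‖ := by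
      rw [l2_opNorm_eq_sqrt_mul_conjTranspose_self (blockRow A),
        l2_opNorm_eq_sqrt_conjTranspose_mul_self (blockCol B), conjTranspose_blockRow,
        conjTranspose_blockCol, blockRow_mul_blockCol, blockRow_mul_blockCol]

end Matrix

open scoped Matrix.Norms.L2Operator in
theorem specNorm_eq_l2_opNorm {m n : ℕ} (A : Matrix (Fin m) (Fin n) ℝ) : specNorm A = ‖A‖ :=
  rfl

/-- Lemma A.7: a matrix Cauchy–Schwarz inequality in the spectral norm. -/
theorem matrix_cauchy_schwarz_specNorm {m n p T : ℕ}
    (A : Fin T → Matrix (Fin m) (Fin n) ℝ) (B : Fin T → Matrix (Fin n) (Fin p) ℝ) :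
    specNorm (∑ t, A t * B t) ≤
      (specNorm (∑ t, A t * (A t)ᵀ)) ^ ((1 : ℝ) / 2) *
        (specNorm (∑ t, (B t)ᵀ * B t)) ^ ((1 : ℝ) / 2) := by
  simp only [specNorm_eq_l2_opNorm, ← Real.sqrt_eq_rpow, ← conjTranspose_eq_transpose_of_trivial]
  exact l2_opNorm_sum_mul_le A B
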